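/- arXiv:2311.13605 — 6 statements merged into one kernel-verified Lean document; each statement's English description precedes it below -/
import Mathlib

section
/- For every real parameter p > 0, the two points X₁* = (−(√2/2)·√(P+p), (√2/4)·(p−P)·√(P+p), (p+P)/2) and X₂* = ((√2/2)·√(P+p), −(√2/4)·(p−P)·√(P+p), (p+P)/2), where P = √(p²+4), are equilibria of the IDMDE vector field, i.e. f(X₁*) = 0 and f(X₂*) = 0. -/
/-! With `z = (p + P)/2` one has `z (z - p) = (P² - p²)/4 = 1`, and both points have the form
`(x, (z - p) x, z)` with `x² = z`. On such points the second component of the field vanishes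
identically, and the first and third reduce to `x (z (z - p) - 1)` and `1 - z (z - p)`. -/

/-- The IDMDE vector field with parameter `p`. -/
def idmde (p : ℝ) (x : ℝ × ℝ × ℝ) : ℝ × ℝ × ℝ :=
  (x.2.1 * x.2.2 - x.1, (x.2.2 - p) * x.1 - x.2.1, 1 - x.1 * x.2.1)

lemma idmde_eq_zero_of_sq_eq {p x y z : ℝ} (hz : z * (z - p) = 1) (hx : x ^ 2 = z)
    (hy : y = (z - p) * x) : idmde p (x, y, z) = 0 := by
  subst hy
  simp only [idmde, Prod.mk_eq_zero]
  exact ⟨by linear_combination x * hz, by ring, by linear_combination -(z - p) * hx - hz⟩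

lemma half_add_sqrt_sq_add_four_mul_sub (p : ℝ) :
    (p + √(p ^ 2 + 4)) / 2 * ((p + √(p ^ 2 + 4)) / 2 - p) = 1 := by
  linear_combination (1 / 4 : ℝ) * Real.sq_sqrt (by positivity : (0 : ℝ) ≤ p ^ 2 + 4)

lemma sq_half_sqrt_two_mul_sqrt_sqrt_sq_add_four_add (p : ℝ) :
    (√2 / 2 * √(√(p ^ 2 + 4) + p)) ^ 2 = (p + √(p ^ 2 + 4)) / 2 := by
  have hP : 0 ≤ √(p ^ 2 + 4) + p := by
    linarith [Real.neg_sqrt_le_of_sq_le (by linarith : p ^ 2 ≤ p ^ 2 + 4)]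
  rw [mul_pow, div_pow, Real.sq_sqrt zero_le_two, Real.sq_sqrt hP]
  ring

theorem idmde_equilibria_general (p : ℝ) :
    idmde p (-(Real.sqrt 2 / 2) * Real.sqrt (Real.sqrt (p ^ 2 + 4) + p),
             (Real.sqrt 2 / 4) * (p - Real.sqrt (p ^ 2 + 4)) *
               Real.sqrt (Real.sqrt (p ^ 2 + 4) + p),
             (p + Real.sqrt (p ^ 2 + 4)) / 2) = 0 ∧
    idmde p ((Real.sqrt 2 / 2) * Real.sqrt (Real.sqrt (p ^ 2 + 4) + p),
             -((Real.sqrt 2 / 4) * (p - Real.sqrt (p ^ 2 + 4)) *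
               Real.sqrt (Real.sqrt (p ^ 2 + 4) + p)),
             (p + Real.sqrt (p ^ 2 + 4)) / 2) = 0 := by
  have hz := half_add_sqrt_sq_add_four_mul_sub p
  have hx := sq_half_sqrt_two_mul_sqrt_sqrt_sq_add_four_add p
  constructor
  · exact idmde_eq_zero_of_sq_eq hz (by rw [neg_mul, neg_sq, hx]) (by ring)
  · exact idmde_eq_zero_of_sq_eq hz hx (by ring)

/-- for every `p > 0`, the two explicit points `X₁*` and `X₂*`
(with `P = √(p²+4)`) are equilibria of the IDMDE vector field. -/
theorem idmde_equilibria (p : ℝ) (hp : 0 < p) :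
    idmde p (-(Real.sqrt 2 / 2) * Real.sqrt (Real.sqrt (p ^ 2 + 4) + p),
             (Real.sqrt 2 / 4) * (p - Real.sqrt (p ^ 2 + 4)) *
               Real.sqrt (Real.sqrt (p ^ 2 + 4) + p),
             (p + Real.sqrt (p ^ 2 + 4)) / 2) = 0 ∧
    idmde p ((Real.sqrt 2 / 2) * Real.sqrt (Real.sqrt (p ^ 2 + 4) + p),
             -((Real.sqrt 2 / 4) * (p - Real.sqrt (p ^ 2 + 4)) *
               Real.sqrt (Real.sqrt (p ^ 2 + 4) + p)),
             (p + Real.sqrt (p ^ 2 + 4)) / 2) = 0 :=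
  idmde_equilibria_general p
end

section
/- For every real parameter p > 0, the equation f(x) = 0 has exactly two real solutions, namely X₁* = (−(√2/2)·√(P+p), (√2/4)·(p−P)·√(P+p), (p+P)/2) and X₂* = ((√2/2)·√(P+p), −(√2/4)·(p−P)·√(P+p), (p+P)/2), where P = √(p²+4); every x ∈ ℝ³ with f(x) = 0 equals X₁* or X₂*. -/
/-!
The second and third components of `idmde p x = 0` force `x₂ = (x₁² - p) x₁` and `x₃ = x₁²`,
after which the whole system reduces to the biquadratic `x₁⁴ - p x₁² - 1 = 0`. Its only
nonnegative root in `x₁²` is `(p + √(p² + 4)) / 2`, which gives exactly two values `±x₁`.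
-/

namespace IDMDE

open Real

def pointOver (p a : ℝ) : ℝ × ℝ × ℝ := (a, (a ^ 2 - p) * a, a ^ 2)

theorem pointOver_injective (p : ℝ) : Function.Injective (pointOver p) :=
  fun _ _ h => congrArg Prod.fst h

theorem idmde_eq_zero_iff {p : ℝ} {x : ℝ × ℝ × ℝ} :
    idmde p x = 0 ↔ ∃ a, a ^ 2 * (a ^ 2 - p) = 1 ∧ x = pointOver p a := by
  obtain ⟨a, b, c⟩ := x
  simp only [idmde, pointOver, Prod.ext_iff, Prod.fst_zero, Prod.snd_zero]
  constructor
  · rintro ⟨e1, e2, e3⟩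
    have hc : c = a ^ 2 := by linear_combination a * e1 + c * e3
    refine ⟨a, ?_, rfl, ?_, hc⟩
    · linear_combination a * e2 - e3 - a ^ 2 * hc
    · linear_combination -e2 + a * hc
  · rintro ⟨a, ha, rfl, rfl, rfl⟩
    exact ⟨by linear_combination a * ha, by ring, by linear_combination -ha⟩

theorem sqrt_sq_add_four_add_pos (p : ℝ) : 0 < √(p ^ 2 + 4) + p := by
  have hP : p ^ 2 < √(p ^ 2 + 4) ^ 2 := by rw [sq_sqrt (by positivity)]; linarith
  nlinarith [abs_lt_of_sq_lt_sq' hP (sqrt_nonneg _)]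

theorem sq_mul_sq_sub_eq_one_iff {p a : ℝ} :
    a ^ 2 * (a ^ 2 - p) = 1 ↔ a ^ 2 = (p + √(p ^ 2 + 4)) / 2 := by
  have hP : √(p ^ 2 + 4) ^ 2 = p ^ 2 + 4 := sq_sqrt (by positivity)
  have hPp := sqrt_sq_add_four_add_pos p
  constructor
  · intro ha
    have hroots : (a ^ 2 - (p + √(p ^ 2 + 4)) / 2) * (a ^ 2 - (p - √(p ^ 2 + 4)) / 2) = 0 := by
      linear_combination ha - hP / 4
    -- the other root `(p - √(p² + 4)) / 2` is negative
    rcases mul_eq_zero.mp hroots with h | h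
    · linarith
    · nlinarith [sq_nonneg a]
  · intro ha
    rw [ha]
    linear_combination hP / 4

theorem sq_sqrt_two_div_two_mul_sqrt {t : ℝ} (ht : 0 ≤ t) : (√2 / 2 * √t) ^ 2 = t / 2 := by
  rw [mul_pow, div_pow, sq_sqrt zero_le_two, sq_sqrt ht]
  ring

end IDMDE

open IDMDE in
theorem idmde_exactly_two_equilibria_general (p : ℝ) :
    let X₁ : ℝ × ℝ × ℝ :=
      (-(Real.sqrt 2 / 2) * Real.sqrt (Real.sqrt (p ^ 2 + 4) + p),
       (Real.sqrt 2 / 4) * (p - Real.sqrt (p ^ 2 + 4)) *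
         Real.sqrt (Real.sqrt (p ^ 2 + 4) + p),
       (p + Real.sqrt (p ^ 2 + 4)) / 2)
    let X₂ : ℝ × ℝ × ℝ :=
      ((Real.sqrt 2 / 2) * Real.sqrt (Real.sqrt (p ^ 2 + 4) + p),
       -((Real.sqrt 2 / 4) * (p - Real.sqrt (p ^ 2 + 4)) *
         Real.sqrt (Real.sqrt (p ^ 2 + 4) + p)),
       (p + Real.sqrt (p ^ 2 + 4)) / 2)
    idmde p X₁ = 0 ∧ idmde p X₂ = 0 ∧ X₁ ≠ X₂ ∧
      ∀ x : ℝ × ℝ × ℝ, idmde p x = 0 → x = X₁ ∨ x = X₂ := by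
  intro X₁ X₂
  set r := Real.sqrt 2 / 2 * Real.sqrt (Real.sqrt (p ^ 2 + 4) + p)
  have hr_pos : 0 < r := by have := sqrt_sq_add_four_add_pos p; positivity
  have hr_sq : r ^ 2 = (p + Real.sqrt (p ^ 2 + 4)) / 2 := by
    rw [sq_sqrt_two_div_two_mul_sqrt (sqrt_sq_add_four_add_pos p).le, add_comm]
  have hr_root : r ^ 2 * (r ^ 2 - p) = 1 := sq_mul_sq_sub_eq_one_iff.mpr hr_sq
  have hX₁ : X₁ = pointOver p (-r) := by
    ext <;> simp only [X₁, pointOver, neg_sq, hr_sq] <;> ring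
  have hX₂ : X₂ = pointOver p r := by
    ext <;> simp only [X₂, pointOver, hr_sq] <;> ring
  simp only [hX₁, hX₂, idmde_eq_zero_iff, (pointOver_injective p).ne_iff]
  refine ⟨⟨-r, by rwa [neg_sq], rfl⟩, ⟨r, hr_root, rfl⟩, by linarith, ?_⟩
  rintro x ⟨a, ha, rfl⟩
  have ha_sq : a ^ 2 = r ^ 2 := by rw [hr_sq, ← sq_mul_sq_sub_eq_one_iff, ha]
  rcases sq_eq_sq_iff_eq_or_eq_neg.mp ha_sq with rfl | rfl
  · exact Or.inr rfl
  · exact Or.inl rfl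

/-- for every `p > 0`, the equation `f(x) = 0` has exactly the two
solutions `X₁*` and `X₂*` (with `P = √(p²+4)`): both are distinct equilibria, and
every solution equals one of them. -/
theorem idmde_exactly_two_equilibria (p : ℝ) (hp : 0 < p) :
    let X₁ : ℝ × ℝ × ℝ :=
      (-(Real.sqrt 2 / 2) * Real.sqrt (Real.sqrt (p ^ 2 + 4) + p),
       (Real.sqrt 2 / 4) * (p - Real.sqrt (p ^ 2 + 4)) *
         Real.sqrt (Real.sqrt (p ^ 2 + 4) + p),
       (p + Real.sqrt (p ^ 2 + 4)) / 2)
    let X₂ : ℝ × ℝ × ℝ :=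
      ((Real.sqrt 2 / 2) * Real.sqrt (Real.sqrt (p ^ 2 + 4) + p),
       -((Real.sqrt 2 / 4) * (p - Real.sqrt (p ^ 2 + 4)) *
         Real.sqrt (Real.sqrt (p ^ 2 + 4) + p)),
       (p + Real.sqrt (p ^ 2 + 4)) / 2)
    idmde p X₁ = 0 ∧ idmde p X₂ = 0 ∧ X₁ ≠ X₂ ∧
      ∀ x : ℝ × ℝ × ℝ, idmde p x = 0 → x = X₁ ∨ x = X₂ :=
  idmde_exactly_two_equilibria_general p
end

section
/- For every real parameter p > 0 and every equilibrium x = (x₁,x₂,x₃) of the IDMDE vector field (i.e. f(x) = 0), one has x₁² = x₃ and x₂² = 1/x₃; consequently x₁² + x₂² = √(p²+4). -/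
/-!
At an equilibrium `x₁ x₂ = 1`, so multiplying the first two equations by `x₁` and `x₂` gives
`x₁² = x₃` and `x₂² = x₃ - p`. Hence `x₃ (x₃ - p) = (x₁ x₂)² = 1`, and
`(x₁² + x₂²)² = (2 x₃ - p)² = 4 x₃ (x₃ - p) + p² = p² + 4`.
-/

namespace idmde

theorem eq_zero_iff {p : ℝ} {x : ℝ × ℝ × ℝ} :
    idmde p x = 0 ↔
      x.2.1 * x.2.2 = x.1 ∧ (x.2.2 - p) * x.1 = x.2.1 ∧ x.1 * x.2.1 = 1 := by
  simp only [idmde, Prod.ext_iff, Prod.fst_zero, Prod.snd_zero, sub_eq_zero,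
    @eq_comm _ 1 (x.1 * x.2.1)]

section Equilibrium

variable {p : ℝ} {x : ℝ × ℝ × ℝ} (hx : idmde p x = 0)
include hx

theorem fst_mul_snd_fst : x.1 * x.2.1 = 1 :=
  (eq_zero_iff.1 hx).2.2

theorem sq_fst : x.1 ^ 2 = x.2.2 := by
  obtain ⟨h₁, -, h₃⟩ := eq_zero_iff.1 hx
  linear_combination (-x.1) * h₁ + x.2.2 * h₃

theorem sq_snd_fst : x.2.1 ^ 2 = x.2.2 - p := by
  obtain ⟨-, h₂, h₃⟩ := eq_zero_iff.1 hx
  linear_combination (-x.2.1) * h₂ + (x.2.2 - p) * h₃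

theorem snd_snd_mul_sq_snd_fst : x.2.2 * x.2.1 ^ 2 = 1 := by
  rw [← sq_fst hx, ← mul_pow, fst_mul_snd_fst hx, one_pow]

theorem sq_add_sq_sq : (x.1 ^ 2 + x.2.1 ^ 2) ^ 2 = p ^ 2 + 4 := by
  have h := snd_snd_mul_sq_snd_fst hx
  rw [sq_snd_fst hx] at h ⊢
  rw [sq_fst hx]
  linear_combination 4 * h

end Equilibrium

end idmde

theorem idmde_equilibrium_square_coordinates_general (p : ℝ)
    (x : ℝ × ℝ × ℝ) (hx : idmde p x = 0) :
    x.1 ^ 2 = x.2.2 ∧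
    x.2.1 ^ 2 = 1 / x.2.2 ∧
    x.1 ^ 2 + x.2.1 ^ 2 = Real.sqrt (p ^ 2 + 4) :=
  ⟨idmde.sq_fst hx, eq_one_div_of_mul_eq_one_right (idmde.snd_snd_mul_sq_snd_fst hx), by
    rw [← idmde.sq_add_sq_sq hx, Real.sqrt_sq (by positivity)]⟩

/-- for every `p > 0` and every equilibrium `x = (x₁,x₂,x₃)` of the
IDMDE vector field, `x₁² = x₃` and `x₂² = 1/x₃`; consequently
`x₁² + x₂² = √(p²+4)`. -/
theorem idmde_equilibrium_square_coordinates (p : ℝ) (hp : 0 < p)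
    (x : ℝ × ℝ × ℝ) (hx : idmde p x = 0) :
    x.1 ^ 2 = x.2.2 ∧
    x.2.1 ^ 2 = 1 / x.2.2 ∧
    x.1 ^ 2 + x.2.1 ^ 2 = Real.sqrt (p ^ 2 + 4) :=
  idmde_equilibrium_square_coordinates_general p x hx
end

section
/- For every real parameter p > 0 and every equilibrium x = (x₁,x₂,x₃) of the IDMDE vector field, the determinant of the Jacobian matrix satisfies det J(x) = −2·√(p²+4). -/
/-- The Jacobian matrix of the IDMDE vector field with parameter `p`,
evaluated at `x = (x₁,x₂,x₃)`. -/
def idmdeJacobian (p : ℝ) (x : ℝ × ℝ × ℝ) : Matrix (Fin 3) (Fin 3) ℝ :=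
  !![-1, x.2.2, x.2.1;
     x.2.2 - p, -1, x.1;
     -x.2.1, -x.1, 0]

theorem Real.sqrt_sq_add_four_of_mul_sub_eq_one {p c : ℝ} (hc : 0 < c) (h : c * (c - p) = 1) :
    √(p ^ 2 + 4) = 2 * c - p := by
  have hcp : 0 < c - p := pos_of_mul_pos_right (h ▸ one_pos) hc.le
  rw [show p ^ 2 + 4 = (2 * c - p) ^ 2 by linear_combination -4 * h]
  exact Real.sqrt_sq (by linarith)

theorem idmdeJacobian_det (p : ℝ) (x : ℝ × ℝ × ℝ) :
    (idmdeJacobian p x).det = -(x.1 ^ 2 + x.2.1 ^ 2) - (2 * x.2.2 - p) * (x.1 * x.2.1) := by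
  simp only [idmdeJacobian, Matrix.det_fin_three, Matrix.of_apply, Matrix.cons_val',
    Matrix.cons_val_zero, Matrix.cons_val_one, Matrix.cons_val_two, Matrix.empty_val',
    Matrix.cons_val_fin_one, Matrix.head_cons, Matrix.tail_cons, Matrix.head_fin_const]
  ring

theorem idmde_eq_zero_iff (p : ℝ) (x : ℝ × ℝ × ℝ) :
    idmde p x = 0 ↔ x.2.1 * x.2.2 = x.1 ∧ (x.2.2 - p) * x.1 = x.2.1 ∧ x.1 * x.2.1 = 1 := by
  simp only [idmde, Prod.ext_iff, Prod.fst_zero, Prod.snd_zero, sub_eq_zero, eq_comm (a := (1 : ℝ))]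

section Equilibrium

variable {p : ℝ} {x : ℝ × ℝ × ℝ}

theorem third_eq_sq_first_of_idmde_eq_zero (hx : idmde p x = 0) : x.2.2 = x.1 ^ 2 := by
  obtain ⟨h₁, -, h₃⟩ := (idmde_eq_zero_iff p x).1 hx
  linear_combination x.1 * h₁ - x.2.2 * h₃

theorem third_pos_of_idmde_eq_zero (hx : idmde p x = 0) : 0 < x.2.2 := by
  obtain ⟨-, -, h₃⟩ := (idmde_eq_zero_iff p x).1 hx
  rw [third_eq_sq_first_of_idmde_eq_zero hx]
  exact sq_pos_of_ne_zero (left_ne_zero_of_mul_eq_one h₃)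

theorem third_mul_third_sub_eq_one_of_idmde_eq_zero (hx : idmde p x = 0) :
    x.2.2 * (x.2.2 - p) = 1 := by
  obtain ⟨-, h₂, h₃⟩ := (idmde_eq_zero_iff p x).1 hx
  linear_combination x.1 * h₂ + h₃ + (x.2.2 - p) * third_eq_sq_first_of_idmde_eq_zero hx

theorem second_sq_of_idmde_eq_zero (hx : idmde p x = 0) : x.2.1 ^ 2 = x.2.2 - p := by
  obtain ⟨-, h₂, -⟩ := (idmde_eq_zero_iff p x).1 hx
  linear_combination (x.2.2 - p) * third_mul_third_sub_eq_one_of_idmde_eq_zero hx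
    - (x.2.1 + (x.2.2 - p) * x.1) * h₂ - (x.2.2 - p) ^ 2 * third_eq_sq_first_of_idmde_eq_zero hx

end Equilibrium

theorem idmde_det_jacobian_general (p : ℝ)
    (x : ℝ × ℝ × ℝ) (hx : idmde p x = 0) :
    (idmdeJacobian p x).det = -2 * Real.sqrt (p ^ 2 + 4) := by
  obtain ⟨-, -, h₃⟩ := (idmde_eq_zero_iff p x).1 hx
  rw [Real.sqrt_sq_add_four_of_mul_sub_eq_one (third_pos_of_idmde_eq_zero hx)
      (third_mul_third_sub_eq_one_of_idmde_eq_zero hx), idmdeJacobian_det,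
    ← third_eq_sq_first_of_idmde_eq_zero hx, second_sq_of_idmde_eq_zero hx, h₃]
  ring

/-- for every `p > 0` and every equilibrium `x` of the IDMDE vector
field, `det J(x) = −2·√(p²+4)`. -/
theorem idmde_det_jacobian (p : ℝ) (hp : 0 < p)
    (x : ℝ × ℝ × ℝ) (hx : idmde p x = 0) :
    (idmdeJacobian p x).det = -2 * Real.sqrt (p ^ 2 + 4) :=
  idmde_det_jacobian_general p x hx
end

section
/- (Matignon stability condition for p = 5, content of Theorem 1.) Let p = 5 and let x be either equilibrium of the IDMDE vector field. Then for every eigenvalue σ ∈ ℂ of the Jacobian matrix J(x) and every fractional order q ∈ (0,1), one has |arg σ| > q·π/2; equivalently, with α_min the minimum of |arg σ| over the eigenvalues, α_min = π/2, so the Matignon index ι = q − 2|α_min|/π = q − 1 is strictly negative for all q ∈ (0,1). -/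
/-- The Jacobian matrix of the IDMDE vector field with parameter `p` at
`x = (x₁,x₂,x₃)`, regarded as a complex 3×3 matrix. -/
def idmdeJacobianC (p : ℝ) (x : ℝ × ℝ × ℝ) : Matrix (Fin 3) (Fin 3) ℂ :=
  !![-1, (x.2.2 : ℂ), (x.2.1 : ℂ);
     ((x.2.2 - p : ℝ) : ℂ), -1, (x.1 : ℂ);
     (-x.2.1 : ℝ), (-x.1 : ℝ), 0]

open Complex Real

lemma idmde_eq_zero {p a b c : ℝ} (h : idmde p (a, b, c) = 0) :
    a * b = 1 ∧ a ^ 2 = c ∧ b ^ 2 = c - p := by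
  simp only [idmde, Prod.ext_iff, Prod.fst_zero, Prod.snd_zero, sub_eq_zero] at h
  obtain ⟨hbc, hca, hab⟩ := h
  refine ⟨hab.symm, ?_, ?_⟩
  · linear_combination (-a) * hbc - c * hab
  · linear_combination (-b) * hca - (c - p) * hab

lemma det_scalar_sub_idmdeJacobianC {p a b c : ℝ} (h : idmde p (a, b, c) = 0) (σ : ℂ) :
    (Matrix.scalar (Fin 3) σ - idmdeJacobianC p (a, b, c)).det
      = (σ + 2) * (σ ^ 2 + ((a ^ 2 + b ^ 2 : ℝ) : ℂ)) := by
  obtain ⟨hab, ha, hb⟩ := idmde_eq_zero h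
  have hab' : (a : ℂ) * b = 1 := by exact_mod_cast hab
  have ha' : (a : ℂ) ^ 2 = c := by exact_mod_cast ha
  have hb' : (b : ℂ) ^ 2 = c - p := by exact_mod_cast hb
  simp only [Matrix.det_fin_three, idmdeJacobianC, Matrix.scalar_apply, Matrix.sub_apply,
    Matrix.of_apply, Matrix.cons_val', Matrix.cons_val_zero, Matrix.cons_val_fin_one,
    Matrix.cons_val_one, Matrix.cons_val, Matrix.diagonal_apply_eq, ne_eq, Fin.reduceEq,
    not_false_eq_true, Matrix.diagonal_apply_ne, ofReal_sub, ofReal_neg, ofReal_add, ofReal_pow]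
  linear_combination
    σ * (-(1 + (a : ℂ) * b) * hab' + (b : ℂ) ^ 2 * ha' + (c : ℂ) * hb') + (2 * (c : ℂ) - p) * hab'
      - ha' - hb'

lemma spectrum_idmdeJacobianC {p a b c : ℝ} (h : idmde p (a, b, c) = 0) :
    spectrum ℂ (idmdeJacobianC p (a, b, c))
      = {-2, I * √(a ^ 2 + b ^ 2), -(I * √(a ^ 2 + b ^ 2))} := by
  ext σ
  have hsq : (I * √(a ^ 2 + b ^ 2)) ^ 2 = -((a ^ 2 + b ^ 2 : ℝ) : ℂ) := by
    rw [mul_pow, I_sq, ← ofReal_pow, sq_sqrt (by positivity)]; ring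
  rw [Matrix.mem_spectrum_iff_isRoot_charpoly, Polynomial.IsRoot.def, Matrix.eval_charpoly,
    det_scalar_sub_idmdeJacobianC h, mul_eq_zero, add_eq_zero_iff_eq_neg, add_eq_zero_iff_eq_neg,
    ← hsq, sq_eq_sq_iff_eq_or_eq_neg]
  simp

lemma abs_arg_I_mul_ofReal {r : ℝ} (hr : 0 < r) : |arg (I * r)| = π / 2 := by
  rw [arg_mul_real hr, arg_I, abs_of_pos (by positivity)]

lemma abs_arg_neg_I_mul_ofReal {r : ℝ} (hr : 0 < r) : |arg (-(I * r))| = π / 2 := by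
  rw [← neg_mul, arg_mul_real hr, arg_neg_I, abs_neg, abs_of_pos (by positivity)]

lemma abs_arg_spectrum_idmdeJacobianC {p a b c : ℝ} (h : idmde p (a, b, c) = 0) :
    {t | ∃ σ ∈ spectrum ℂ (idmdeJacobianC p (a, b, c)), t = |σ.arg|} = {π, π / 2} := by
  have ha : a ≠ 0 := left_ne_zero_of_mul_eq_one (idmde_eq_zero h).1
  have hr : 0 < √(a ^ 2 + b ^ 2) := Real.sqrt_pos.2 (by positivity)
  have h2 : |arg (-2)| = π := by
    rw [show (-2 : ℂ) = ((-2 : ℝ) : ℂ) by push_cast; rfl, arg_ofReal_of_neg (by norm_num),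
      abs_of_pos pi_pos]
  ext t
  simp [spectrum_idmdeJacobianC h, h2, abs_arg_I_mul_ofReal hr, abs_arg_neg_I_mul_ofReal hr]

/-- Matignon stability condition for `p = 5`, Theorem 1: at either
equilibrium `x` of the IDMDE vector field with `p = 5`, every eigenvalue `σ` of
`J(x)` satisfies `|arg σ| > q·π/2` for every fractional order `q ∈ (0,1)`;
equivalently, the minimum of `|arg σ|` over the eigenvalues equals `π/2`, so the
Matignon index `ι = q − 2|α_min|/π = q − 1` is strictly negative for `q ∈ (0,1)`. -/
theorem idmde_matignon_p5 (x : ℝ × ℝ × ℝ) (hx : idmde 5 x = 0) :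
    (∀ σ ∈ spectrum ℂ (idmdeJacobianC 5 x),
      ∀ q : ℝ, 0 < q → q < 1 → q * Real.pi / 2 < |σ.arg|) ∧
    IsLeast {a : ℝ | ∃ σ ∈ spectrum ℂ (idmdeJacobianC 5 x), a = |σ.arg|}
      (Real.pi / 2) ∧
    ∀ q : ℝ, 0 < q → q < 1 → q - 2 * |Real.pi / 2| / Real.pi < 0 := by
  obtain ⟨a, b, c⟩ := x
  have hargs := abs_arg_spectrum_idmdeJacobianC hx
  have hleast : IsLeast {π, π / 2} (π / 2) := by
    refine ⟨by simp, ?_⟩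
    simp [lowerBounds, pi_pos.le]
  refine ⟨fun σ hσ q hq0 hq1 => ?_, hargs ▸ hleast, fun q _ hq1 => ?_⟩
  · have hmem : |σ.arg| ∈ ({π, π / 2} : Set ℝ) := hargs ▸ ⟨σ, hσ, rfl⟩
    calc q * π / 2 < π / 2 := by nlinarith [pi_pos]
      _ ≤ |σ.arg| := hleast.2 hmem
  · rw [abs_of_pos (by positivity), mul_div_cancel₀ _ two_ne_zero, div_self pi_ne_zero]
    linarith
end

section
/- For p = 5, the two equilibria of the IDMDE vector field are exactly X₁,₂* = (∓√((5+√29)/2), ±(5−√29)/2 · √((5+√29)/2), (5+√29)/2), whose coordinates are numerically (∓2.2787, ∓0.4388, 5.1926). -/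
namespace Idmde

variable {p : ℝ}

-- The two roots of `t² - p t - 1`.
noncomputable def rootPos (p : ℝ) : ℝ := (p + √(p ^ 2 + 4)) / 2

noncomputable def rootNeg (p : ℝ) : ℝ := (p - √(p ^ 2 + 4)) / 2

lemma sq_sqrt_discrim (p : ℝ) : √(p ^ 2 + 4) ^ 2 = p ^ 2 + 4 :=
  Real.sq_sqrt (by positivity)

lemma abs_lt_sqrt_discrim (p : ℝ) : |p| < √(p ^ 2 + 4) :=
  abs_lt_of_sq_lt_sq (by rw [sq_sqrt_discrim]; simp) (Real.sqrt_nonneg _)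

lemma rootPos_pos (p : ℝ) : 0 < rootPos p := by
  have := abs_lt_sqrt_discrim p
  unfold rootPos
  linarith [neg_abs_le p]

lemma rootNeg_neg (p : ℝ) : rootNeg p < 0 := by
  have := abs_lt_sqrt_discrim p
  unfold rootNeg
  linarith [le_abs_self p]

lemma rootPos_mul_rootNeg (p : ℝ) : rootPos p * rootNeg p = -1 := by
  unfold rootPos rootNeg
  linear_combination (-1 / 4 : ℝ) * sq_sqrt_discrim p

lemma mul_sub_eq_one_iff {c : ℝ} (hc : 0 ≤ c) : c * (c - p) = 1 ↔ c = rootPos p := by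
  have vieta : c * (c - p) - 1 = (c - rootPos p) * (c - rootNeg p) := by
    unfold rootPos rootNeg
    linear_combination (1 / 4 : ℝ) * sq_sqrt_discrim p
  rw [← sub_eq_zero, vieta, mul_eq_zero, sub_eq_zero, sub_eq_zero, or_iff_left_iff_imp]
  intro h
  linarith [rootNeg_neg p]

lemma sqrt_rootPos_mul_rootNeg_mul_sqrt_rootPos (p : ℝ) :
    √(rootPos p) * (rootNeg p * √(rootPos p)) = -1 := by
  rw [mul_left_comm, ← sq, Real.sq_sqrt (rootPos_pos p).le, mul_comm, rootPos_mul_rootNeg]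

lemma idmde_eq_zero_iff_mul_eq_one (a b c : ℝ) :
    idmde p (a, b, c) = 0 ↔ a * b = 1 ∧ c = a ^ 2 ∧ c * (c - p) = 1 := by
  simp only [idmde, Prod.ext_iff, Prod.fst_zero, Prod.snd_zero, sub_eq_zero]
  constructor
  · rintro ⟨h₁, h₂, h₃⟩
    have hc : c = a ^ 2 := by linear_combination c * h₃ + a * h₁
    exact ⟨h₃.symm, hc, by linear_combination a * h₂ + (c - p) * hc - h₃⟩
  · rintro ⟨hab, hc, hcp⟩
    exact ⟨by linear_combination b * hc + a * hab,
      by linear_combination -(c - p) * a * hab - (c - p) * b * hc + b * hcp, hab.symm⟩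

theorem idmde_eq_zero_iff (x : ℝ × ℝ × ℝ) :
    idmde p x = 0 ↔
      x = (-√(rootPos p), rootNeg p * √(rootPos p), rootPos p) ∨
      x = (√(rootPos p), -(rootNeg p * √(rootPos p)), rootPos p) := by
  obtain ⟨a, b, c⟩ := x
  set r := √(rootPos p)
  have hr : r ^ 2 = rootPos p := Real.sq_sqrt (rootPos_pos p).le
  have hrb := sqrt_rootPos_mul_rootNeg_mul_sqrt_rootPos p
  have hr0 : r ≠ 0 := (Real.sqrt_pos.mpr (rootPos_pos p)).ne'
  simp only [idmde_eq_zero_iff_mul_eq_one, Prod.mk.injEq]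
  constructor
  · rintro ⟨hab, hc, hcp⟩
    rw [mul_sub_eq_one_iff (hc ▸ sq_nonneg a)] at hcp
    subst hcp
    rcases sq_eq_sq_iff_eq_or_eq_neg.mp (hc.symm.trans hr.symm) with rfl | rfl
    · exact .inr ⟨rfl, mul_left_cancel₀ hr0 (by linear_combination hab + hrb), rfl⟩
    · exact .inl ⟨rfl, mul_left_cancel₀ hr0 (by linear_combination -hab - hrb), rfl⟩
  · rintro (⟨rfl, rfl, rfl⟩ | ⟨rfl, rfl, rfl⟩) <;>
      refine ⟨by linear_combination -hrb, by simp only [neg_sq, hr], ?_⟩ <;>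
      exact (mul_sub_eq_one_iff (rootPos_pos p).le).mpr rfl

lemma sqrt_29_mem : √29 ∈ Set.Ioo (5.38516 : ℝ) 5.38517 :=
  ⟨(Real.lt_sqrt (by norm_num)).mpr (by norm_num), (Real.sqrt_lt' (by norm_num)).mpr (by norm_num)⟩

end Idmde

/-- for `p = 5`, the two equilibria of the IDMDE vector field are
exactly `X₁,₂* = (∓√((5+√29)/2), ±(5−√29)/2·√((5+√29)/2), (5+√29)/2)`, whose
coordinates are numerically `(∓2.2787, ∓0.4388, 5.1926)`. -/
theorem idmde_equilibria_p5 :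
    let X₁ : ℝ × ℝ × ℝ :=
      (-Real.sqrt ((5 + Real.sqrt 29) / 2),
       (5 - Real.sqrt 29) / 2 * Real.sqrt ((5 + Real.sqrt 29) / 2),
       (5 + Real.sqrt 29) / 2)
    let X₂ : ℝ × ℝ × ℝ :=
      (Real.sqrt ((5 + Real.sqrt 29) / 2),
       -((5 - Real.sqrt 29) / 2 * Real.sqrt ((5 + Real.sqrt 29) / 2)),
       (5 + Real.sqrt 29) / 2)
    (∀ x : ℝ × ℝ × ℝ, idmde 5 x = 0 ↔ x = X₁ ∨ x = X₂) ∧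
    |X₁.1 - (-2.2787)| < 0.0001 ∧ |X₁.2.1 - (-0.4388)| < 0.0001 ∧
    |X₁.2.2 - 5.1926| < 0.0001 ∧
    |X₂.1 - 2.2787| < 0.0001 ∧ |X₂.2.1 - 0.4388| < 0.0001 ∧
    |X₂.2.2 - 5.1926| < 0.0001 := by
  intro X₁ X₂
  have hpos : Idmde.rootPos 5 = (5 + √29) / 2 := by norm_num [Idmde.rootPos]
  have hneg : Idmde.rootNeg 5 = (5 - √29) / 2 := by norm_num [Idmde.rootNeg]
  obtain ⟨hs₁, hs₂⟩ := Idmde.sqrt_29_mem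
  have hr₁ : (2.27872 : ℝ) < √((5 + √29) / 2) :=
    (Real.lt_sqrt (by norm_num)).mpr (by linarith)
  have hr₂ : √((5 + √29) / 2) < 2.27873 :=
    (Real.sqrt_lt' (by norm_num)).mpr (by linarith)
  refine ⟨fun x ↦ by simpa only [hpos, hneg] using Idmde.idmde_eq_zero_iff (p := 5) x, ?_⟩
  simp only [X₁, X₂, abs_sub_lt_iff]
  refine ⟨⟨?_, ?_⟩, ⟨?_, ?_⟩, ⟨?_, ?_⟩, ⟨?_, ?_⟩, ⟨?_, ?_⟩, ⟨?_, ?_⟩⟩ <;> nlinarith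
end
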